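/- Suppose η = +1 (call case) and the European values are strictly positive: e_k(x) > 0 for every k < n and x ∈ C. Then the stopping regions are star-shaped away from the origin in (s,z): if x = (s,y,z) ∈ S_k for some k < n and γ ≥ 1, then γ∘x = (γs, y, γz) ∈ S_k. -/

import Mathlib

/-!
By backward induction the value functions are affinely subhomogeneous under the scaling:
`v k (γ ∘ x) ≤ γ * v k x + (γ - 1) * K * exp (-r t k)` for `γ ≥ 1`. The call payoff satisfies
this bound, the kernels commute with the scaling, and the discount factor in the constant
increases when passing from `t (k + 1)` back to `t k`. At a point of the stopping region the
payoff dominates the positive European value, so the option is in the money there, and in the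
money the payoff satisfies the bound with equality. Hence `v k (γ ∘ x) ≤ φ k (γ ∘ x)`.
-/

open MeasureTheory ProbabilityTheory

/-- The ambient space `ℝ^{d₁} × ℝ^{d₂} × ℝ^{d₃}` for the state `x = (s, y, z)`. -/
abbrev StateSpace (d₁ d₂ d₃ : ℕ) : Type :=
  (Fin d₁ → ℝ) × (Fin d₂ → ℝ) × (Fin d₃ → ℝ)

def growthClass {E : Type*} [SeminormedAddCommGroup E] (C : Set E) (a : ℝ) : Set (E → ℝ) :=
  {ψ | ContinuousOn ψ C ∧ ∃ c > 0, ∀ x ∈ C, |ψ x| ≤ c * (1 + ‖x‖ ^ a)}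

namespace growthClass

variable {E : Type*} [SeminormedAddCommGroup E] {C : Set E} {a : ℝ} {ψ ψ' : E → ℝ}

theorem congr (hψ : ψ ∈ growthClass C a) (h : Set.EqOn ψ ψ' C) : ψ' ∈ growthClass C a := by
  obtain ⟨hcont, c, hc, hbound⟩ := hψ
  exact ⟨hcont.congr h.symm, c, hc, fun x hx => h hx ▸ hbound x hx⟩

theorem max_mem (hψ : ψ ∈ growthClass C a) (hψ' : ψ' ∈ growthClass C a) :
    (fun x => max (ψ x) (ψ' x)) ∈ growthClass C a := by
  obtain ⟨hcont, c, hc, hbound⟩ := hψ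
  obtain ⟨hcont', c', hc', hbound'⟩ := hψ'
  refine ⟨hcont.sup hcont', c + c', add_pos hc hc', fun x hx => ?_⟩
  calc |max (ψ x) (ψ' x)| ≤ max |ψ x| |ψ' x| := abs_max_le_max_abs_abs
    _ ≤ |ψ x| + |ψ' x| := max_le_add_of_nonneg (abs_nonneg _) (abs_nonneg _)
    _ ≤ c * (1 + ‖x‖ ^ a) + c' * (1 + ‖x‖ ^ a) := add_le_add (hbound x hx) (hbound' x hx)
    _ = (c + c') * (1 + ‖x‖ ^ a) := by ring

end growthClass

theorem max_mul_sub_le {K γ : ℝ} (hK : 0 ≤ K) (hγ : 1 ≤ γ) (u : ℝ) :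
    max (γ * u - K) 0 ≤ γ * max (u - K) 0 + (γ - 1) * K := by
  have hm := le_max_left (u - K) 0
  have hm0 := le_max_right (u - K) 0
  apply max_le <;> nlinarith

theorem max_mul_sub_eq {K γ u : ℝ} (hK : 0 ≤ K) (hγ : 1 ≤ γ) (hu : K ≤ u) :
    max (γ * u - K) 0 = γ * max (u - K) 0 + (γ - 1) * K := by
  rw [max_eq_left (by nlinarith), max_eq_left (by linarith)]
  ring

section CallPayoff

variable {X : Type*} {C : Set X} {T : X → X} {α β φ : X → ℝ} {γ D K : ℝ}

theorem callPayoff_comp_le (hTC : Set.MapsTo T C C) (hα : ∀ x ∈ C, α (T x) = γ * α x)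
    (hβ : ∀ x ∈ C, β (T x) = γ * β x) (hφ : ∀ x ∈ C, φ x = D * max (α x - β x - K) 0)
    (hD : 0 ≤ D) (hK : 0 ≤ K) (hγ : 1 ≤ γ) {x : X} (hx : x ∈ C) :
    φ (T x) ≤ γ * φ x + (γ - 1) * K * D := by
  rw [hφ _ (hTC hx), hφ x hx, hα x hx, hβ x hx, ← mul_sub]
  calc D * max (γ * (α x - β x) - K) 0 ≤ D * (γ * max (α x - β x - K) 0 + (γ - 1) * K) := by
        gcongr; exact max_mul_sub_le hK hγ _
    _ = γ * (D * max (α x - β x - K) 0) + (γ - 1) * K * D := by ring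

theorem callPayoff_comp_eq (hTC : Set.MapsTo T C C) (hα : ∀ x ∈ C, α (T x) = γ * α x)
    (hβ : ∀ x ∈ C, β (T x) = γ * β x) (hφ : ∀ x ∈ C, φ x = D * max (α x - β x - K) 0)
    (hK : 0 ≤ K) (hγ : 1 ≤ γ) {x : X} (hx : x ∈ C) (hKx : K ≤ α x - β x) :
    φ (T x) = γ * φ x + (γ - 1) * K * D := by
  rw [hφ _ (hTC hx), hφ x hx, hα x hx, hβ x hx, ← mul_sub, max_mul_sub_eq hK hγ hKx]
  ring

end CallPayoff

theorem max_le_mul_max_add {a b a' b' γ c : ℝ} (hγ : 0 ≤ γ) (ha : a' ≤ γ * a + c)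
    (hb : b' ≤ γ * b + c) : max a' b' ≤ γ * max a b + c :=
  max_le (ha.trans (by gcongr; exact le_max_left _ _))
    (hb.trans (by gcongr; exact le_max_right _ _))

theorem integral_map_le_of_ae_le {X : Type*} [MeasurableSpace X] {μ : Measure X}
    [IsProbabilityMeasure μ] {f : X → ℝ} {T : X → X} (hT : Measurable T)
    (hf : Integrable f μ) (hfT : Integrable f (μ.map T)) {γ c : ℝ}
    (h : ∀ᵐ y ∂μ, f (T y) ≤ γ * f y + c) :
    ∫ y, f y ∂(μ.map T) ≤ γ * ∫ y, f y ∂μ + c := by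
  rw [integral_map hT.aemeasurable hfT.aestronglyMeasurable]
  calc ∫ y, f (T y) ∂μ ≤ ∫ y, (γ * f y + c) ∂μ :=
        integral_mono_ae ((integrable_map_measure hfT.aestronglyMeasurable hT.aemeasurable).mp hfT)
          ((hf.const_mul γ).add (integrable_const c)) h
    _ = γ * ∫ y, f y ∂μ + c := by
        rw [integral_add (hf.const_mul γ) (integrable_const c), integral_const_mul,
          integral_const, probReal_univ, one_smul]

section BackwardInduction

variable {X : Type*} [MeasurableSpace X] {C : Set X} {n : ℕ} {κ : ℕ → Kernel X X}
  {φ v e : ℕ → X → ℝ}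

theorem european_le_value (hκC : ∀ k < n, ∀ x ∈ C, ∀ᵐ y ∂κ k x, y ∈ C)
    (hvint : ∀ k < n, ∀ x ∈ C, Integrable (v (k + 1)) (κ k x))
    (heint : ∀ k < n, ∀ x ∈ C, Integrable (e (k + 1)) (κ k x))
    (hvn : ∀ x ∈ C, v n x = φ n x)
    (hv : ∀ k < n, ∀ x ∈ C, v k x = max (φ k x) (∫ y, v (k + 1) y ∂κ k x))
    (hen : ∀ x ∈ C, e n x = φ n x) (he : ∀ k < n, ∀ x ∈ C, e k x = ∫ y, e (k + 1) y ∂κ k x) :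
    ∀ k ≤ n, ∀ x ∈ C, e k x ≤ v k x := by
  intro k hk
  induction hk using Nat.decreasingInduction with
  | self => exact fun x hx => (hen x hx).trans_le (hvn x hx).ge
  | of_succ k hk ih =>
    intro x hx
    rw [he k hk x hx, hv k hk x hx]
    exact le_max_of_le_right <|
      integral_mono_ae (heint k hk x hx) (hvint k hk x hx) ((hκC k hk x hx).mono ih)

theorem value_comp_le [∀ k, IsMarkovKernel (κ k)] {T : X → X} (hT : Measurable T)
    (hTC : Set.MapsTo T C C) {γ : ℝ} (hγ : 0 ≤ γ) {c : ℕ → ℝ} (hc : ∀ k < n, c (k + 1) ≤ c k)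
    (hκC : ∀ k < n, ∀ x ∈ C, ∀ᵐ y ∂κ k x, y ∈ C)
    (hκT : ∀ k < n, ∀ x ∈ C, (κ k x).map T = κ k (T x))
    (hvint : ∀ k < n, ∀ x ∈ C, Integrable (v (k + 1)) (κ k x))
    (hφT : ∀ k ≤ n, ∀ x ∈ C, φ k (T x) ≤ γ * φ k x + c k)
    (hvn : ∀ x ∈ C, v n x = φ n x)
    (hv : ∀ k < n, ∀ x ∈ C, v k x = max (φ k x) (∫ y, v (k + 1) y ∂κ k x)) :
    ∀ k ≤ n, ∀ x ∈ C, v k (T x) ≤ γ * v k x + c k := by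
  intro k hk
  induction hk using Nat.decreasingInduction with
  | self => exact fun x hx => by rw [hvn x hx, hvn _ (hTC hx)]; exact hφT n le_rfl x hx
  | of_succ k hk ih =>
    intro x hx
    rw [hv k hk x hx, hv k hk _ (hTC hx)]
    refine max_le_mul_max_add hγ (hφT k hk.le x hx) ?_
    have hint := hvint k hk x hx
    calc ∫ y, v (k + 1) y ∂κ k (T x) = ∫ y, v (k + 1) y ∂(κ k x).map T := by rw [hκT k hk x hx]
      _ ≤ γ * ∫ y, v (k + 1) y ∂κ k x + c (k + 1) :=
        integral_map_le_of_ae_le hT hint (hκT k hk x hx ▸ hvint k hk _ (hTC hx))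
          ((hκC k hk x hx).mono ih)
      _ ≤ γ * ∫ y, v (k + 1) y ∂κ k x + c k := by linarith [hc k hk]

end BackwardInduction

section GrowthClass

variable {E : Type*} [SeminormedAddCommGroup E] [MeasurableSpace E] {C : Set E} {a : ℝ} {n : ℕ}
  {κ : ℕ → Kernel E E} {φ : ℕ → E → ℝ}

theorem value_mem_growthClass
    (hκ : ∀ k < n, ∀ ψ ∈ growthClass C a, (fun x => ∫ y, ψ y ∂κ k x) ∈ growthClass C a)
    (hφ : ∀ k ≤ n, φ k ∈ growthClass C a) {v : ℕ → E → ℝ} (hvn : ∀ x ∈ C, v n x = φ n x)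
    (hv : ∀ k < n, ∀ x ∈ C, v k x = max (φ k x) (∫ y, v (k + 1) y ∂κ k x)) :
    ∀ k ≤ n, v k ∈ growthClass C a := by
  intro k hk
  induction hk using Nat.decreasingInduction with
  | self => exact growthClass.congr (hφ n le_rfl) fun x hx => (hvn x hx).symm
  | of_succ k hk ih =>
    exact growthClass.congr (growthClass.max_mem (hφ k hk.le) (hκ k hk _ ih))
      fun x hx => (hv k hk x hx).symm

theorem european_mem_growthClass
    (hκ : ∀ k < n, ∀ ψ ∈ growthClass C a, (fun x => ∫ y, ψ y ∂κ k x) ∈ growthClass C a)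
    (hφn : φ n ∈ growthClass C a) {e : ℕ → E → ℝ} (hen : ∀ x ∈ C, e n x = φ n x)
    (he : ∀ k < n, ∀ x ∈ C, e k x = ∫ y, e (k + 1) y ∂κ k x) :
    ∀ k ≤ n, e k ∈ growthClass C a := by
  intro k hk
  induction hk using Nat.decreasingInduction with
  | self => exact growthClass.congr hφn fun x hx => (hen x hx).symm
  | of_succ k hk ih => exact growthClass.congr (hκ k hk _ ih) fun x hx => (he k hk x hx).symm

end GrowthClass

theorem stmt_7_general
    {d₁ d₂ d₃ : ℕ}
    (C : Set (StateSpace d₁ d₂ d₃))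
    (scale : ℝ → StateSpace d₁ d₂ d₃ → StateSpace d₁ d₂ d₃)
    (hscale : ∀ γ x, scale γ x = (γ • x.1, x.2.1, γ • x.2.2))
    (hC : ∀ γ > (0 : ℝ), ∀ x ∈ C, scale γ x ∈ C)
    (n : ℕ) (t : ℕ → ℝ) (ht : ∀ i < n, t i < t (i + 1))
    (a : ℝ)
    (La : Set (StateSpace d₁ d₂ d₃ → ℝ))
    (hLa : La = {ψ | ContinuousOn ψ C ∧
      ∃ c > 0, ∀ x ∈ C, |ψ x| ≤ c * (1 + ‖x‖ ^ a)})
    (α β : StateSpace d₁ d₂ d₃ → ℝ)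
    (hαhom : ∀ γ > (0 : ℝ), ∀ x ∈ C, α (scale γ x) = γ * α x)
    (hβhom : ∀ γ > (0 : ℝ), ∀ x ∈ C, β (scale γ x) = γ * β x)
    (K r η : ℝ) (hK : 0 < K) (hr : 0 ≤ r) (hη : η = 1)
    (φ : ℕ → StateSpace d₁ d₂ d₃ → ℝ)
    (hφdef : ∀ k ≤ n, ∀ x ∈ C,
      φ k x = Real.exp (-(r * t k)) * max (η * (α x - β x - K)) 0)
    (hφLa : ∀ k ≤ n, φ k ∈ La)
    (κ : ℕ → Kernel (StateSpace d₁ d₂ d₃) (StateSpace d₁ d₂ d₃))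
    (hκ : ∀ k, IsMarkovKernel (κ k))
    (hκC : ∀ k < n, ∀ x ∈ C, (κ k) x Cᶜ = 0)
    (hgc : ∀ k < n, ∀ ψ ∈ La,
      (∀ x ∈ C, Integrable ψ ((κ k) x)) ∧
      (fun x => ∫ y, ψ y ∂((κ k) x)) ∈ La)
    (hκscale : ∀ k < n, ∀ γ > (0 : ℝ), ∀ x ∈ C,
      Measure.map (scale γ) ((κ k) x) = (κ k) (scale γ x))
    (v : ℕ → StateSpace d₁ d₂ d₃ → ℝ)
    (hvn : ∀ x ∈ C, v n x = φ n x)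
    (hv : ∀ k < n, ∀ x ∈ C, v k x = max (φ k x) (∫ y, v (k + 1) y ∂((κ k) x)))
    (e : ℕ → StateSpace d₁ d₂ d₃ → ℝ)
    (hen : ∀ x ∈ C, e n x = φ n x)
    (he : ∀ k < n, ∀ x ∈ C, e k x = ∫ y, e (k + 1) y ∂((κ k) x))
    (hepos : ∀ k < n, ∀ x ∈ C, 0 < e k x)
    (S : ℕ → Set (StateSpace d₁ d₂ d₃))
    (hS : ∀ k, S k = {x | x ∈ C ∧ v k x = φ k x}) :
    ∀ k < n, ∀ x ∈ S k, ∀ γ : ℝ, 1 ≤ γ → scale γ x ∈ S k := by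
  subst hη
  obtain rfl : La = growthClass C a := hLa
  have := hκ
  intro k hk x hxS γ hγ
  rw [hS] at hxS ⊢
  obtain ⟨hxC, hvx⟩ := hxS
  have hγ0 : 0 < γ := by linarith
  have hTC : Set.MapsTo (scale γ) C C := hC γ hγ0
  have hT : Measurable (scale γ) := by
    rw [show scale γ = _ from funext (hscale γ)]
    fun_prop
  have hAE : ∀ k < n, ∀ x ∈ C, ∀ᵐ y ∂κ k x, y ∈ C := fun k hk x hx => ae_iff.2 (hκC k hk x hx)
  have hφ : ∀ j ≤ n, ∀ y ∈ C, φ j y = Real.exp (-(r * t j)) * max (α y - β y - K) 0 := by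
    simpa only [one_mul] using hφdef
  have hdisc : ∀ j < n, Real.exp (-(r * t (j + 1))) ≤ Real.exp (-(r * t j)) := fun j hj =>
    Real.exp_le_exp.2 (neg_le_neg (mul_le_mul_of_nonneg_left (ht j hj).le hr))
  have hvG := value_mem_growthClass (fun k hk ψ hψ => (hgc k hk ψ hψ).2) hφLa hvn hv
  have heG := european_mem_growthClass (fun k hk ψ hψ => (hgc k hk ψ hψ).2) (hφLa n le_rfl) hen he
  have hvint : ∀ k < n, ∀ x ∈ C, Integrable (v (k + 1)) (κ k x) :=
    fun k hk => (hgc k hk _ (hvG (k + 1) hk)).1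
  have hev := european_le_value hAE hvint (fun k hk => (hgc k hk _ (heG (k + 1) hk)).1)
    hvn hv hen he
  have hvT := value_comp_le hT hTC hγ0.le (c := fun j => (γ - 1) * K * Real.exp (-(r * t j)))
    (fun j hj => mul_le_mul_of_nonneg_left (hdisc j hj) (mul_nonneg (sub_nonneg.2 hγ) hK.le))
    hAE (fun k hk => hκscale k hk γ hγ0) hvint
    (fun j hj _ => callPayoff_comp_le hTC (hαhom γ hγ0) (hβhom γ hγ0) (hφ j hj)
      (Real.exp_pos _).le hK.le hγ)
    hvn hv k hk.le x hxC
  have hKx : K ≤ α x - β x := by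
    by_contra! h
    have hφ0 : φ k x = 0 := by rw [hφ k hk.le x hxC, max_eq_right (by linarith), mul_zero]
    linarith [hepos k hk x hxC, hev k hk.le x hxC]
  have hφeq := callPayoff_comp_eq hTC (hαhom γ hγ0) (hβhom γ hγ0) (hφ k hk.le) hK.le hγ hxC hKx
  exact ⟨hTC hxC, le_antisymm (hvT.trans (by rw [hvx, hφeq]))
    (hv k hk _ (hTC hxC) ▸ le_max_left _ _)⟩

/-- Call case (`η = +1`): suppose the European values are strictly
positive, `e_k(x) > 0` for every `k < n` and `x ∈ C`, where `e_n = φ(n,·)` and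
`e_k(x) = ∫ e_{k+1} dκ_k(x)`.  Then the stopping regions
`S_k = {x ∈ C : v_k(x) = φ(k,x)}` are star-shaped away from the origin in `(s,z)`:
if `x = (s,y,z) ∈ S_k` for some `k < n` and `γ ≥ 1`, then
`γ∘x = (γs, y, γz) ∈ S_k`. -/
theorem stmt_7
    {d₁ d₂ d₃ : ℕ}
    (C : Set (StateSpace d₁ d₂ d₃)) (hCmeas : MeasurableSet C)
    (scale : ℝ → StateSpace d₁ d₂ d₃ → StateSpace d₁ d₂ d₃)
    (hscale : ∀ γ x, scale γ x = (γ • x.1, x.2.1, γ • x.2.2))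
    (hC : ∀ γ > (0 : ℝ), ∀ x ∈ C, scale γ x ∈ C)
    (n : ℕ) (hn : 1 ≤ n) (t : ℕ → ℝ) (ht : ∀ i < n, t i < t (i + 1))
    (a : ℝ) (ha : 0 < a)
    (La : Set (StateSpace d₁ d₂ d₃ → ℝ))
    (hLa : La = {ψ | ContinuousOn ψ C ∧
      ∃ c > 0, ∀ x ∈ C, |ψ x| ≤ c * (1 + ‖x‖ ^ a)})
    (α β : StateSpace d₁ d₂ d₃ → ℝ)
    (hαc : ContinuousOn α C) (hαpos : ∀ x ∈ C, 0 < α x)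
    (hαhom : ∀ γ > (0 : ℝ), ∀ x ∈ C, α (scale γ x) = γ * α x)
    (hβc : ContinuousOn β C) (hβnn : ∀ x ∈ C, 0 ≤ β x)
    (hβhom : ∀ γ > (0 : ℝ), ∀ x ∈ C, β (scale γ x) = γ * β x)
    (K r η : ℝ) (hK : 0 < K) (hr : 0 ≤ r) (hη : η = 1)
    (φ : ℕ → StateSpace d₁ d₂ d₃ → ℝ)
    (hφdef : ∀ k ≤ n, ∀ x ∈ C,
      φ k x = Real.exp (-(r * t k)) * max (η * (α x - β x - K)) 0)
    (hφLa : ∀ k ≤ n, φ k ∈ La)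
    (κ : ℕ → Kernel (StateSpace d₁ d₂ d₃) (StateSpace d₁ d₂ d₃))
    (hκ : ∀ k, IsMarkovKernel (κ k))
    (hκC : ∀ k < n, ∀ x ∈ C, (κ k) x Cᶜ = 0)
    (hgc : ∀ k < n, ∀ ψ ∈ La,
      (∀ x ∈ C, Integrable ψ ((κ k) x)) ∧
      (fun x => ∫ y, ψ y ∂((κ k) x)) ∈ La)
    (hκscale : ∀ k < n, ∀ γ > (0 : ℝ), ∀ x ∈ C,
      Measure.map (scale γ) ((κ k) x) = (κ k) (scale γ x))
    (v : ℕ → StateSpace d₁ d₂ d₃ → ℝ)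
    (hvn : ∀ x ∈ C, v n x = φ n x)
    (hv : ∀ k < n, ∀ x ∈ C, v k x = max (φ k x) (∫ y, v (k + 1) y ∂((κ k) x)))
    (e : ℕ → StateSpace d₁ d₂ d₃ → ℝ)
    (hen : ∀ x ∈ C, e n x = φ n x)
    (he : ∀ k < n, ∀ x ∈ C, e k x = ∫ y, e (k + 1) y ∂((κ k) x))
    (hepos : ∀ k < n, ∀ x ∈ C, 0 < e k x)
    (S : ℕ → Set (StateSpace d₁ d₂ d₃))
    (hS : ∀ k, S k = {x | x ∈ C ∧ v k x = φ k x}) :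
    ∀ k < n, ∀ x ∈ S k, ∀ γ : ℝ, 1 ≤ γ → scale γ x ∈ S k :=
  stmt_7_general C scale hscale hC n t ht a La hLa α β hαhom hβhom K r η hK hr hη φ hφdef hφLa κ hκ
    hκC hgc hκscale v hvn hv e hen he hepos S hS
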